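/- Let n ≥ 0 and let q be a positive integer, and set N_r := 1 + q^r + q^{2r} + … + q^{nr} for r ≥ 1 (when q is a prime power this is the number of 𝔽_{q^r}-points of ℙ^n). With a_i := (1/i)·Σ_{d ∣ i} μ(i/d)·N_d and π_w := Σ_{λ : |λ| = w} (−1)^{ℓ(λ)} · Π_{i≥1} C(a_i, λ_i) (sum over all partitions λ of weight w), one has π_w = 0 for every w ≥ n + 2. -/

import Mathlib

open scoped Classical

/-- Generalized binomial coefficient `C(a, k) = a(a-1)⋯(a-k+1)/k!` for `a : ℚ`. -/
def genChoose (a : ℚ) (k : ℕ) : ℚ :=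
  (∏ j ∈ Finset.range k, (a - (j : ℚ))) / (Nat.factorial k : ℚ)

/-- `a N i = (1/i) Σ_{d ∣ i} μ(i/d) N d`, the Möbius convolution divided by `i`. -/
noncomputable def moebiusConv (N : ℕ → ℚ) (i : ℕ) : ℚ :=
  (1 / (i : ℚ)) * ∑ d ∈ i.divisors, ((ArithmeticFunction.moebius (i / d) : ℤ) : ℚ) * N d

/-- `π_w(N) = Σ_{|λ| = w} (−1)^{ℓ(λ)} Π_{i ≥ 1} C(a_i, λ_i)`, the sum over all partitions `λ`
of weight `w`, where `λ_i` is the number of parts of `λ` equal to `i` and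
`a_i = (1/i) Σ_{d ∣ i} μ(i/d) N d`. -/
noncomputable def piW (N : ℕ → ℚ) (w : ℕ) : ℚ :=
  ∑ p : Nat.Partition w, (-1 : ℚ) ^ (Multiset.card p.parts) *
    ∏ i ∈ p.parts.toFinset, genChoose (moebiusConv N i) (p.parts.count i)

/-! `π_w` is the coefficient of `X ^ w` in the partition generating function
`G = ∏_{i ≥ 1} (1 - X ^ i) ^ {a_i}`. Its logarithmic derivative is
`-∑_k (∑_{d ∣ k+1} d a_d) X ^ k = -∑_k N_{k+1} X ^ k` by Möbius inversion, which is also the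
logarithmic derivative of the polynomial `P = ∏_{j ≤ n} (1 - q ^ j X)`. Both have constant
term 1, so `G = P`, and `P` has degree `n + 1`. Only the factors with `i ≤ w` matter for the
coefficient of `X ^ w`; for that finite product the two logarithmic derivatives agree below
degree `w`, which already forces agreement of the coefficients up to `X ^ w`. -/

open PowerSeries

section CommRing

variable {R : Type*} [CommRing R]

lemma derivative_expand (p : ℕ) (hp : p ≠ 0) (φ : R⟦X⟧) :
    d⁄dX R (expand p hp φ) = expand p hp (d⁄dX R φ) * ((p : R⟦X⟧) * X ^ (p - 1)) := by
  rw [expand_apply, expand_apply, derivative_subst (HasSubst.X_pow hp), derivative_pow,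
    derivative_X, mul_one]

lemma derivative_one_sub_C_mul_X (c : R) :
    d⁄dX R (1 - C c * X) = (C (-c) * rescale c (mk 1)) * (1 - C c * X) := by
  have hinv : rescale c (mk 1) * (1 - C c * X) = 1 := by
    simpa [rescale_X] using congrArg (rescale c) (mk_one_mul_one_sub_eq_one (S := R))
  rw [mul_assoc, hinv]
  simp

lemma derivative_prod_of_derivative_eq_mul {ι : Type*} (s : Finset ι) {g t : ι → R⟦X⟧}
    (h : ∀ i ∈ s, d⁄dX R (g i) = t i * g i) :
    d⁄dX R (∏ i ∈ s, g i) = (∑ i ∈ s, t i) * ∏ i ∈ s, g i := by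
  induction s using Finset.cons_induction with
  | empty => simp
  | cons j s hj ih =>
    rw [Finset.forall_mem_cons] at h
    rw [Finset.prod_cons, Finset.sum_cons, Derivation.leibniz, ih h.2, h.1, smul_eq_mul,
      smul_eq_mul]
    ring

lemma coeff_eq_of_derivative_eq_mul [IsAddTorsionFree R] {f g s t : R⟦X⟧} {w : ℕ}
    (hf : d⁄dX R f = s * f) (hg : d⁄dX R g = t * g)
    (h0 : constantCoeff f = constantCoeff g) (hst : ∀ k < w, coeff k s = coeff k t) :
    ∀ k ≤ w, coeff k f = coeff k g := by
  intro k
  induction k using Nat.strong_induction_on with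
  | _ k ih =>
    intro hk
    cases k with
    | zero => simpa using h0
    | succ k =>
      have hderiv : coeff k (d⁄dX R f) = coeff k (d⁄dX R g) := by
        rw [hf, hg, coeff_mul, coeff_mul]
        refine Finset.sum_congr rfl fun x hx => ?_
        rw [Finset.HasAntidiagonal.mem_antidiagonal] at hx
        rw [hst x.1 (by omega), ih x.2 (by omega) (by omega)]
      rw [coeff_derivative, coeff_derivative, ← Nat.cast_succ, ← nsmul_eq_mul',
        ← nsmul_eq_mul'] at hderiv
      exact nsmul_right_injective k.succ_ne_zero hderiv

lemma coeff_X_pow_pred_mul_expand_mk_one (i : ℕ) (hi : i ≠ 0) (k : ℕ) :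
    coeff k (X ^ (i - 1) * expand i hi (mk 1) : R⟦X⟧) = if i ∣ k + 1 then 1 else 0 := by
  rw [coeff_X_pow_mul', coeff_expand]
  by_cases hk : i - 1 ≤ k
  · have hdvd : i ∣ k - (i - 1) ↔ i ∣ k + 1 := by
      rw [← Nat.dvd_add_self_right, show k - (i - 1) + i = k + 1 by omega]
    simp [hk, hdvd]
  · rw [if_neg hk, if_neg (Nat.not_dvd_of_pos_of_lt k.succ_pos (by omega))]

lemma coeff_prod_eq_of_X_pow_dvd_sub_one {ι : Type*} [DecidableEq ι] {s t : Finset ι}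
    (hst : s ⊆ t) {g : ι → R⟦X⟧} {n : ℕ} (h : ∀ i ∈ t \ s, X ^ (n + 1) ∣ g i - 1) :
    coeff n (∏ i ∈ t, g i) = coeff n (∏ i ∈ s, g i) := by
  obtain ⟨r, hr⟩ : X ^ (n + 1) ∣ ∏ i ∈ t \ s, g i - 1 := by
    refine Finset.prod_induction g (fun x => X ^ (n + 1) ∣ x - 1) (fun x y hx hy => ?_)
      (by simp) h
    rw [show x * y - 1 = x * (y - 1) + (x - 1) by ring]
    exact (hy.mul_left x).add hx
  rw [← Finset.prod_sdiff hst, eq_add_of_sub_eq hr, add_mul, one_mul, map_add, mul_assoc,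
    coeff_X_pow_mul', if_neg (by omega), zero_add]

lemma coeff_prod_one_sub_C_mul_X_of_card_lt {ι : Type*} (s : Finset ι) (c : ι → R) {k : ℕ}
    (hk : s.card < k) : coeff k (∏ i ∈ s, (1 - C (c i) * X)) = 0 := by
  have hpoly : ∏ i ∈ s, (1 - C (c i) * X) =
      ((∏ i ∈ s, (1 - Polynomial.C (c i) * Polynomial.X) : Polynomial R) : R⟦X⟧) := by
    rw [← Polynomial.coeToPowerSeries.ringHom_apply, map_prod]
    simp
  rw [hpoly, Polynomial.coeff_coe]
  refine Polynomial.coeff_eq_zero_of_natDegree_lt (lt_of_le_of_lt ?_ hk)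
  refine (Polynomial.natDegree_prod_le _ _).trans
    ((Finset.sum_le_card_nsmul s _ 1 fun i _ => ?_).trans (by simp))
  compute_degree!

end CommRing

namespace Nat.Partition

open scoped PowerSeries.WithPiTopology

variable {R : Type*} [CommRing R]

lemma one_add_tsum_smul_X_pow_eq_expand [TopologicalSpace R] [T2Space R] (f : ℕ → ℕ → R)
    {i : ℕ} (hi : i ≠ 0) (hf : f i 0 = 1) :
    1 + ∑' j, f i (j + 1) • (X : R⟦X⟧) ^ (i * (j + 1)) =
      expand i hi (PowerSeries.mk (f i)) := by
  ext k
  rw [map_add, (summable_genFun_term' f hi).map_tsum _ (WithPiTopology.continuous_coeff _ _),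
    coeff_expand, coeff_mk]
  simp only [map_smul, coeff_X_pow, smul_eq_mul, mul_ite, mul_one, mul_zero]
  by_cases hik : i ∣ k
  · obtain ⟨m, rfl⟩ := hik
    cases m with
    | zero => simp [hi, hf]
    | succ m =>
      rw [if_pos (dvd_mul_right i _), Nat.mul_div_cancel_left _ (Nat.pos_of_ne_zero hi),
        tsum_eq_single m fun j hj => if_neg fun h => hj (by simp [hi] at h; omega)]
      simp [hi]
  · have hk : ∀ j, k ≠ i * (j + 1) := fun j h => hik ⟨_, h⟩
    have hk0 : k ≠ 0 := fun h => hik (h ▸ dvd_zero i)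
    simp [hik, hk, hk0, coeff_one]

lemma coeff_genFun_eq_coeff_prod_expand (f : ℕ → ℕ → R) (hf : ∀ i, f i 0 = 1) (n : ℕ) :
    coeff n (genFun f) = coeff n
      (∏ i ∈ Finset.range n, expand (i + 1) i.succ_ne_zero (PowerSeries.mk (f (i + 1)))) := by
  -- `hasProd_genFun` needs a Hausdorff topology on `R`; the discrete one will do.
  let : TopologicalSpace R := ⊥
  have : DiscreteTopology R := ⟨rfl⟩
  have hprod := hasProd_genFun f
  simp only [fun i => one_add_tsum_smul_X_pow_eq_expand f i.succ_ne_zero (hf (i + 1))] at hprod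
  refine tendsto_nhds_unique (((WithPiTopology.continuous_coeff R n).tendsto _).comp hprod)
    (tendsto_atTop_of_eventually_const (i₀ := Finset.range n) fun s hs => ?_)
  refine coeff_prod_eq_of_X_pow_dvd_sub_one hs fun i hi => X_pow_dvd_iff.2 fun m hm => ?_
  have hni : n ≤ i := by simpa using (Finset.mem_sdiff.1 hi).2
  rcases m with _ | m
  · simp [hf]
  · have hndvd : ¬ i + 1 ∣ m + 1 := Nat.not_dvd_of_pos_of_lt m.succ_pos (by omega)
    simp [coeff_expand, coeff_one, hndvd]

end Nat.Partition

lemma succ_mul_genChoose_succ (a : ℚ) (m : ℕ) :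
    (m + 1) * genChoose a (m + 1) = (a - m) * genChoose a m := by
  rw [genChoose, genChoose, Finset.prod_range_succ, Nat.factorial_succ]
  push_cast
  field_simp

-- `(1 - X) ^ a`
noncomputable def binomSeries (a : ℚ) : ℚ⟦X⟧ :=
  mk fun k => (-1) ^ k * genChoose a k

lemma one_sub_X_mul_derivative_binomSeries (a : ℚ) :
    (1 - X) * d⁄dX ℚ (binomSeries a) = -C a * binomSeries a := by
  ext k
  cases k with
  | zero =>
    rw [sub_mul, one_mul, map_sub, coeff_zero_X_mul, coeff_derivative]
    simp [binomSeries, genChoose]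
  | succ k =>
    have h := succ_mul_genChoose_succ a (k + 1)
    simp only [sub_mul, one_mul, map_sub, coeff_succ_X_mul, coeff_derivative, binomSeries,
      coeff_mk, neg_mul, coeff_C_mul, map_neg]
    push_cast at h ⊢
    linear_combination (-1 : ℚ) ^ k * h

lemma derivative_binomSeries (a : ℚ) :
    d⁄dX ℚ (binomSeries a) = (-C a * mk 1) * binomSeries a := by
  rw [← one_mul (d⁄dX ℚ _), ← mk_one_mul_one_sub_eq_one, mul_assoc,
    one_sub_X_mul_derivative_binomSeries]
  ring

lemma derivative_expand_binomSeries (i : ℕ) (hi : i ≠ 0) (a : ℚ) :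
    d⁄dX ℚ (expand i hi (binomSeries a)) =
      (C (-(i * a)) * (X ^ (i - 1) * expand i hi (mk 1))) * expand i hi (binomSeries a) := by
  rw [derivative_expand, derivative_binomSeries, map_mul, map_mul, map_neg, expand_C, map_neg,
    map_mul, ← map_natCast C]
  ring

lemma sum_range_ite_succ_dvd {M : Type*} [AddCommMonoid M] (g : ℕ → M) {m w : ℕ} (hm : 0 < m)
    (hmw : m ≤ w) :
    ∑ i ∈ Finset.range w, (if i + 1 ∣ m then g (i + 1) else 0) = ∑ d ∈ m.divisors, g d := by
  rw [Finset.range_eq_Ico]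
  refine (Finset.sum_Ico_add' (fun d => if d ∣ m then g d else 0) 0 w 1).trans ?_
  rw [← Finset.sum_filter]
  congr 1
  ext d
  simp only [Finset.mem_filter, Finset.mem_Ico, Nat.mem_divisors]
  constructor
  · rintro ⟨-, hd⟩
    exact ⟨hd, hm.ne'⟩
  · rintro ⟨hd, -⟩
    have := Nat.le_of_dvd hm hd
    have := Nat.pos_of_dvd_of_pos hd hm
    omega

lemma sum_divisors_mul_moebiusConv (N : ℕ → ℚ) {m : ℕ} (hm : 0 < m) :
    ∑ d ∈ m.divisors, d * moebiusConv N d = N m := by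
  refine (ArithmeticFunction.sum_eq_iff_sum_mul_moebius_eq (f := fun d => d * moebiusConv N d)
    (g := N)).2 (fun k hk => ?_) m hm
  rw [Nat.sum_divisorsAntidiagonal' (f := fun x y => (ArithmeticFunction.moebius x : ℚ) * N y),
    moebiusConv, ← mul_assoc, mul_one_div_cancel (by exact_mod_cast hk.ne'), one_mul]

lemma piW_eq_coeff_prod_expand_binomSeries (N : ℕ → ℚ) (w : ℕ) :
    piW N w = coeff w (∏ i ∈ Finset.range w,
      expand (i + 1) i.succ_ne_zero (binomSeries (moebiusConv N (i + 1)))) := by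
  refine Eq.trans ?_ (Nat.Partition.coeff_genFun_eq_coeff_prod_expand
    (fun i c => (-1) ^ c * genChoose (moebiusConv N i) c) (by simp [genChoose]) w)
  rw [piW, Nat.Partition.coeff_genFun]
  refine Finset.sum_congr rfl fun p _ => ?_
  rw [Finsupp.prod, Multiset.toFinsupp_support, Finset.prod_mul_distrib,
    Finset.prod_pow_eq_pow_sum]
  simp

theorem pi_projective_space_vanishes_general (n : ℕ) (q : ℕ)
    (N : ℕ → ℚ)
    (hN : ∀ r : ℕ, 1 ≤ r → N r = ∑ j ∈ Finset.range (n + 1), (q : ℚ) ^ (j * r))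
    (w : ℕ) (hw : n + 2 ≤ w) :
    piW N w = 0 := by
  set a := moebiusConv N
  have hG := derivative_prod_of_derivative_eq_mul (Finset.range w)
    fun i _ => derivative_expand_binomSeries (i + 1) i.succ_ne_zero (a (i + 1))
  have hP := derivative_prod_of_derivative_eq_mul (Finset.range (n + 1))
    fun j _ => derivative_one_sub_C_mul_X ((q : ℚ) ^ j)
  refine (piW_eq_coeff_prod_expand_binomSeries N w).trans ?_
  rw [coeff_eq_of_derivative_eq_mul hG hP (by simp [binomSeries, genChoose]) (fun k hk => ?_) w
    le_rfl, coeff_prod_one_sub_C_mul_X_of_card_lt _ _ (by rw [Finset.card_range]; omega)]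
  -- both logarithmic derivatives have `k`-th coefficient `-N (k + 1)`
  simp only [map_sum, coeff_C_mul, coeff_X_pow_pred_mul_expand_mk_one, coeff_rescale, coeff_mk,
    Pi.one_apply, mul_ite, mul_one, mul_zero]
  rw [sum_range_ite_succ_dvd (fun d => -(d * a d)) k.succ_pos hk, Finset.sum_neg_distrib,
    sum_divisors_mul_moebiusConv N k.succ_pos, hN (k + 1) (by omega), ← Finset.sum_neg_distrib]
  exact Finset.sum_congr rfl fun j _ => by ring

/-- For `n ≥ 0`, a positive integer `q`, and
`N r = 1 + q^r + q^{2r} + ⋯ + q^{nr}` (the point count of `ℙ^n` over `𝔽_{q^r}` when `q` is a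
prime power), one has `π_w = 0` for every `w ≥ n + 2`. -/
theorem pi_projective_space_vanishes (n : ℕ) (q : ℕ) (hq : 1 ≤ q)
    (N : ℕ → ℚ)
    (hN : ∀ r : ℕ, 1 ≤ r → N r = ∑ j ∈ Finset.range (n + 1), (q : ℚ) ^ (j * r))
    (w : ℕ) (hw : n + 2 ≤ w) :
    piW N w = 0 :=
  pi_projective_space_vanishes_general n q N hN w hw
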